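/- For all real numbers p > 2, s ∈ (0,1), and positive reals a, b, x, y, the inequality (s·a^p/x^p + (1−s)·b^p/y^p)·(s·x² + (1−s)·y²)·(s·x + (1−s)·y)^{p−2} ≥ (s·a + (1−s)·b)^p holds. -/

import Mathlib

/-! Write `a = (a / x) · (x²)^(1/p) · x^((p-2)/p)`. The claim is then Hölder's inequality for
three factors with weights `1/p, 1/p, (p-2)/p` against the two-point measure `s δ₁ + (1-s) δ₂`.
Hölder in this geometric-mean form follows by dividing each factor by its total mass and applying
the weighted AM-GM inequality pointwise. -/

open Real Finset

theorem Real.sum_mul_rpow_mul_rpow_mul_rpow_le {ι : Type*} (s : Finset ι) (w f g h : ι → ℝ)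
    {α β γ : ℝ} (hα : 0 ≤ α) (hβ : 0 ≤ β) (hγ : 0 ≤ γ) (hαβγ : α + β + γ = 1)
    (hw : ∀ i ∈ s, 0 ≤ w i) (hf : ∀ i ∈ s, 0 ≤ f i) (hg : ∀ i ∈ s, 0 ≤ g i)
    (hh : ∀ i ∈ s, 0 ≤ h i) (hF : 0 < ∑ i ∈ s, w i * f i) (hG : 0 < ∑ i ∈ s, w i * g i)
    (hH : 0 < ∑ i ∈ s, w i * h i) :
    ∑ i ∈ s, w i * (f i ^ α * g i ^ β * h i ^ γ)
      ≤ (∑ i ∈ s, w i * f i) ^ α * (∑ i ∈ s, w i * g i) ^ β * (∑ i ∈ s, w i * h i) ^ γ := by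
  set F := ∑ i ∈ s, w i * f i
  set G := ∑ i ∈ s, w i * g i
  set H := ∑ i ∈ s, w i * h i
  have hD : 0 < F ^ α * G ^ β * H ^ γ := by positivity
  have pointwise : ∀ i ∈ s, w i * (f i ^ α * g i ^ β * h i ^ γ) / (F ^ α * G ^ β * H ^ γ)
      ≤ α / F * (w i * f i) + β / G * (w i * g i) + γ / H * (w i * h i) := by
    intro i hi
    have amgm := geom_mean_le_arith_mean3_weighted hα hβ hγ (div_nonneg (hf i hi) hF.le)
      (div_nonneg (hg i hi) hG.le) (div_nonneg (hh i hi) hH.le) hαβγ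
    rw [div_rpow (hf i hi) hF.le, div_rpow (hg i hi) hG.le, div_rpow (hh i hi) hH.le] at amgm
    calc w i * (f i ^ α * g i ^ β * h i ^ γ) / (F ^ α * G ^ β * H ^ γ)
        = w i * (f i ^ α / F ^ α * (g i ^ β / G ^ β) * (h i ^ γ / H ^ γ)) := by
          field_simp
      _ ≤ w i * (α * (f i / F) + β * (g i / G) + γ * (h i / H)) :=
          mul_le_mul_of_nonneg_left amgm (hw i hi)
      _ = α / F * (w i * f i) + β / G * (w i * g i) + γ / H * (w i * h i) := by ring
  rw [← div_le_one hD, sum_div]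
  calc ∑ i ∈ s, w i * (f i ^ α * g i ^ β * h i ^ γ) / (F ^ α * G ^ β * H ^ γ)
      ≤ ∑ i ∈ s, (α / F * (w i * f i) + β / G * (w i * g i) + γ / H * (w i * h i)) :=
        sum_le_sum pointwise
    _ = 1 := by
        rw [sum_add_distrib, sum_add_distrib, ← mul_sum, ← mul_sum, ← mul_sum,
          div_mul_cancel₀ α hF.ne', div_mul_cancel₀ β hG.ne', div_mul_cancel₀ γ hH.ne', hαβγ]

theorem Real.rpow_div_rpow_rpow_inv_mul_sq_rpow_inv_mul_rpow {p t u : ℝ} (hp : p ≠ 0)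
    (ht : 0 ≤ t) (hu : 0 < u) :
    (t ^ p / u ^ p) ^ p⁻¹ * (u ^ 2) ^ p⁻¹ * u ^ ((p - 2) / p) = t := by
  rw [← div_rpow ht hu.le, rpow_rpow_inv (div_nonneg ht hu.le) hp, ← rpow_natCast,
    ← rpow_mul hu.le, mul_assoc, ← rpow_add hu]
  have hexp : (2 : ℕ) * p⁻¹ + (p - 2) / p = 1 := by field_simp; push_cast; ring
  rw [hexp, rpow_one, div_mul_cancel₀ t hu.ne']

theorem Real.rpow_inv_mul_rpow_inv_mul_rpow_div_rpow {p F G H : ℝ} (hp : p ≠ 0)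
    (hF : 0 ≤ F) (hG : 0 ≤ G) (hH : 0 ≤ H) :
    (F ^ p⁻¹ * G ^ p⁻¹ * H ^ ((p - 2) / p)) ^ p = F * G * H ^ (p - 2) := by
  rw [mul_rpow (by positivity) (by positivity), mul_rpow (by positivity) (by positivity),
    rpow_inv_rpow hF hp, rpow_inv_rpow hG hp, ← rpow_mul hH, div_mul_cancel₀ _ hp]

theorem holder_convexity_ineq (p s a b x y : ℝ) (hp : 2 < p) (hs0 : 0 < s) (hs1 : s < 1)
    (ha : 0 < a) (hb : 0 < b) (hx : 0 < x) (hy : 0 < y) :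
    (s * a ^ p / x ^ p + (1 - s) * b ^ p / y ^ p) * (s * x ^ 2 + (1 - s) * y ^ 2)
      * (s * x + (1 - s) * y) ^ (p - 2) ≥ (s * a + (1 - s) * b) ^ p := by
  have hp0 : p ≠ 0 := by positivity
  have ht : 0 < 1 - s := by linarith
  generalize 1 - s = t at ht ⊢
  have holder := sum_mul_rpow_mul_rpow_mul_rpow_le univ ![s, t] ![a ^ p / x ^ p, b ^ p / y ^ p]
    ![x ^ 2, y ^ 2] ![x, y] (α := p⁻¹) (β := p⁻¹) (γ := (p - 2) / p) (by positivity)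
    (by positivity) (div_nonneg (by linarith) (by positivity)) (by field_simp; ring)
    (by simp [Fin.forall_fin_two]; constructor <;> positivity)
    (by simp [Fin.forall_fin_two]; constructor <;> positivity)
    (by simp [Fin.forall_fin_two]; constructor <;> positivity)
    (by simp [Fin.forall_fin_two]; constructor <;> positivity)
    (by simp; positivity) (by simp; positivity) (by simp; positivity)
  simp only [Fin.sum_univ_two, Matrix.cons_val_zero, Matrix.cons_val_one,
    rpow_div_rpow_rpow_inv_mul_sq_rpow_inv_mul_rpow hp0 ha.le hx,
    rpow_div_rpow_rpow_inv_mul_sq_rpow_inv_mul_rpow hp0 hb.le hy] at holder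
  have hpow := rpow_le_rpow (by positivity) holder (by positivity : 0 ≤ p)
  rw [rpow_inv_mul_rpow_inv_mul_rpow_div_rpow hp0 (by positivity) (by positivity)
    (by positivity)] at hpow
  simpa only [mul_div_assoc] using hpow
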